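/- Let a > 0 and let k : [0, ∞) → ℝ be continuous with k(s) ≤ −a² for all s, let F be the solution of F'' + kF = 0 with F(0) = 0, F'(0) = 1, and define g(r) = exp(−∫ᵣ^∞ dt/F(t)) for r > 0. Then g is twice differentiable on (0, ∞) with g''(r) = g(r)·(1 − F'(r))/F(r)², and g''(r) ≤ 0 for all r > 0, i.e. g is concave on (0, ∞). -/

import Mathlib

/-!
The Jacobi equation with `k ≤ -a²` makes `F F'`, and then `F'² - a² F²`, nondecreasing on `[0, ∞)`,
so `F'² ≥ 1 + a² F²`. As `F'` is continuous, never vanishes and starts at `1`, this gives `F' ≥ 1`,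
hence `F(s) ≥ s`, and `F' ≥ a F`, so that `F(s) e^{-as}` is nondecreasing. Thus `1/F` decays
exponentially and `g = exp(-∫ᵣ^∞ 1/F)` satisfies `g' = g/F` and `g'' = g (1 - F')/F² ≤ 0`.
-/

open Set Real Filter Topology MeasureTheory

theorem monotoneOn_Ici_of_hasDerivWithinAt_nonneg {f f' : ℝ → ℝ} {a : ℝ}
    (hf : ∀ x ∈ Ici a, HasDerivWithinAt f (f' x) (Ici a) x) (hf' : ∀ x ∈ Ioi a, 0 ≤ f' x) :
    MonotoneOn f (Ici a) :=
  monotoneOn_of_hasDerivWithinAt_nonneg (convex_Ici a)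
    (fun x hx => (hf x hx).continuousWithinAt)
    (fun x hx => by
      rw [interior_Ici] at hx ⊢
      exact (hf x (Ioi_subset_Ici_self hx)).mono Ioi_subset_Ici_self)
    (by rwa [interior_Ici])

theorem hasDerivAt_integral_Ioi {f : ℝ → ℝ} {c x : ℝ} (hf : ContinuousOn f (Ioi c))
    (hint : ∀ y ∈ Ioi c, IntegrableOn f (Ioi y)) (hx : c < x) :
    HasDerivAt (fun y => ∫ t in Ioi y, f t) (-f x) x := by
  obtain ⟨b, hcb, hbx⟩ := exists_between hx
  have hsplit : ∀ y ∈ Ioi c,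
      ∫ t in Ioi y, f t = (∫ t in Ioi b, f t) - ∫ t in b..y, f t := fun y hy => by
    rw [← intervalIntegral.integral_interval_add_Ioi (hint b hcb) (hint y hy), add_sub_cancel_left]
  have hbx_int : IntervalIntegrable f volume b x := by
    refine (hf.mono fun t ht => hcb.trans_le ?_).intervalIntegrable
    rw [uIcc_of_le hbx.le] at ht
    exact ht.1
  have hderiv := (intervalIntegral.integral_hasDerivAt_right hbx_int
    (hf.stronglyMeasurableAtFilter isOpen_Ioi x hx) (hf.continuousAt (Ioi_mem_nhds hx))).const_sub
      (∫ t in Ioi b, f t)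
  exact hderiv.congr_of_eventuallyEq (eventuallyEq_of_mem (Ioi_mem_nhds hx) hsplit)

theorem hasDerivAt_exp_neg_integral_Ioi {f g : ℝ → ℝ} {c x : ℝ} (hf : ContinuousOn f (Ioi c))
    (hint : ∀ y ∈ Ioi c, IntegrableOn f (Ioi y))
    (hg : ∀ y ∈ Ioi c, g y = exp (-∫ t in Ioi y, f t)) (hx : c < x) :
    HasDerivAt g (g x * f x) x := by
  have h : HasDerivAt (fun y => exp (-∫ t in Ioi y, f t)) (g x * f x) x := by
    simpa [hg x hx] using (hasDerivAt_integral_Ioi hf hint hx).neg.exp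
  exact h.congr_of_eventuallyEq (eventuallyEq_of_mem (Ioi_mem_nhds hx) hg)

structure IsJacobiSolution (k F F' F'' : ℝ → ℝ) : Prop where
  hasDerivWithinAt : ∀ s ∈ Ici (0 : ℝ), HasDerivWithinAt F (F' s) (Ici 0) s
  hasDerivWithinAt_deriv : ∀ s ∈ Ici (0 : ℝ), HasDerivWithinAt F' (F'' s) (Ici 0) s
  ode : ∀ s ∈ Ici (0 : ℝ), F'' s + k s * F s = 0
  map_zero : F 0 = 0
  deriv_zero : F' 0 = 1

namespace IsJacobiSolution

variable {k F F' F'' : ℝ → ℝ} {a : ℝ}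

theorem continuousOn_deriv (hJ : IsJacobiSolution k F F' F'') : ContinuousOn F' (Ici 0) :=
  fun s hs => (hJ.hasDerivWithinAt_deriv s hs).continuousWithinAt

theorem mul_deriv_nonneg (hJ : IsJacobiSolution k F F' F'') (hk : ∀ s ∈ Ici 0, k s ≤ 0) :
    ∀ s ∈ Ici (0 : ℝ), 0 ≤ F s * F' s := by
  have hmono : MonotoneOn (fun s => F s * F' s) (Ici 0) :=
    monotoneOn_Ici_of_hasDerivWithinAt_nonneg
      (fun s hs => (hJ.hasDerivWithinAt s hs).mul (hJ.hasDerivWithinAt_deriv s hs))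
      (fun s hs => by
        have hF'' : F'' s = -k s * F s := by linarith [hJ.ode s (Ioi_subset_Ici_self hs)]
        have := hk s (Ioi_subset_Ici_self hs)
        rw [hF'']
        nlinarith [sq_nonneg (F' s), sq_nonneg (F s)])
  intro s hs
  simpa [hJ.map_zero] using hmono self_mem_Ici hs hs

theorem one_add_sq_le_sq_deriv (hJ : IsJacobiSolution k F F' F'')
    (hk : ∀ s ∈ Ici 0, k s ≤ -a ^ 2) : ∀ s ∈ Ici (0 : ℝ), 1 + a ^ 2 * F s ^ 2 ≤ F' s ^ 2 := by
  have hFF' := hJ.mul_deriv_nonneg fun s hs => (hk s hs).trans (neg_nonpos.2 (sq_nonneg a))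
  have hmono : MonotoneOn (fun s => F' s ^ 2 - a ^ 2 * F s ^ 2) (Ici 0) :=
    monotoneOn_Ici_of_hasDerivWithinAt_nonneg
      (fun s hs => ((hJ.hasDerivWithinAt_deriv s hs).fun_pow 2).sub
        (((hJ.hasDerivWithinAt s hs).fun_pow 2).const_mul (a ^ 2)))
      (fun s hs => by
        have hs' := Ioi_subset_Ici_self hs
        have hF'' : F'' s = -k s * F s := by linarith [hJ.ode s hs']
        have := mul_nonneg (hFF' s hs') (show 0 ≤ -k s - a ^ 2 by linarith [hk s hs'])
        simp only [hF'', Nat.cast_ofNat, Nat.add_one_sub_one, pow_one]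
        nlinarith)
  intro s hs
  have := hmono self_mem_Ici hs hs
  simp only [hJ.map_zero, hJ.deriv_zero] at this
  linarith

theorem one_le_deriv (hJ : IsJacobiSolution k F F' F'') (hk : ∀ s ∈ Ici 0, k s ≤ 0) :
    ∀ s ∈ Ici (0 : ℝ), 1 ≤ F' s := by
  have hsq : ∀ s ∈ Ici (0 : ℝ), 1 ≤ F' s ^ 2 := fun s hs => by
    simpa using hJ.one_add_sq_le_sq_deriv (a := 0) (by simpa using hk) s hs
  intro s hs
  by_contra! hlt
  -- `F'` never vanishes, so it cannot pass from `F' 0 = 1` to `F' s ≤ -1`.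
  have hneg : F' s ≤ -1 := by nlinarith [hsq s hs]
  have hmem : (0 : ℝ) ∈ Icc (F' s) (F' 0) := ⟨by linarith, by rw [hJ.deriv_zero]; norm_num⟩
  obtain ⟨t, ht, hzero⟩ := isPreconnected_Ici.intermediate_value hs self_mem_Ici
    hJ.continuousOn_deriv hmem
  have := hsq t ht
  rw [hzero] at this
  norm_num at this

theorem id_le (hJ : IsJacobiSolution k F F' F'') (hk : ∀ s ∈ Ici 0, k s ≤ 0) :
    ∀ s ∈ Ici (0 : ℝ), s ≤ F s := by
  have hmono : MonotoneOn (fun s => F s - s) (Ici 0) :=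
    monotoneOn_Ici_of_hasDerivWithinAt_nonneg
      (fun s hs => (hJ.hasDerivWithinAt s hs).sub (hasDerivWithinAt_id s _))
      (fun s hs => sub_nonneg.2 (hJ.one_le_deriv hk s (Ioi_subset_Ici_self hs)))
  intro s hs
  simpa [hJ.map_zero] using hmono self_mem_Ici hs hs

theorem pos (hJ : IsJacobiSolution k F F' F'') (hk : ∀ s ∈ Ici 0, k s ≤ 0) {s : ℝ}
    (hs : 0 < s) : 0 < F s :=
  hs.trans_le (hJ.id_le hk s hs.le)

theorem monotoneOn_mul_exp_neg (hJ : IsJacobiSolution k F F' F'')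
    (hk : ∀ s ∈ Ici 0, k s ≤ -a ^ 2) : MonotoneOn (fun s => F s * exp (-(a * s))) (Ici 0) := by
  have hk0 : ∀ s ∈ Ici 0, k s ≤ 0 := fun s hs => (hk s hs).trans (neg_nonpos.2 (sq_nonneg a))
  have hexp (s : ℝ) : HasDerivAt (fun s => exp (-(a * s))) (exp (-(a * s)) * -a) s := by
    simpa using ((hasDerivAt_id s).const_mul a).neg.exp
  refine monotoneOn_Ici_of_hasDerivWithinAt_nonneg
    (fun s hs => (hJ.hasDerivWithinAt s hs).mul (hexp s).hasDerivWithinAt) (fun s hs => ?_)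
  have hs' := Ioi_subset_Ici_self hs
  have hF' : a * F s ≤ F' s := by
    have hF'pos := (zero_lt_one.trans_le (hJ.one_le_deriv hk0 s hs')).le
    refine le_of_sq_le_sq ?_ hF'pos
    nlinarith [hJ.one_add_sq_le_sq_deriv hk s hs']
  have := exp_pos (-(a * s))
  nlinarith

theorem continuousOn_one_div (hJ : IsJacobiSolution k F F' F'') (hk : ∀ s ∈ Ici 0, k s ≤ 0) :
    ContinuousOn (fun t => 1 / F t) (Ioi 0) :=
  continuousOn_const.div (fun s hs => (hJ.hasDerivWithinAt s (Ioi_subset_Ici_self hs))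
    |>.continuousWithinAt.mono Ioi_subset_Ici_self) fun _ hs => (hJ.pos hk hs).ne'

theorem integrableOn_one_div_Ioi (hJ : IsJacobiSolution k F F' F'') (ha : 0 < a)
    (hk : ∀ s ∈ Ici 0, k s ≤ -a ^ 2) {r : ℝ} (hr : 0 < r) :
    IntegrableOn (fun t => 1 / F t) (Ioi r) := by
  have hk0 : ∀ s ∈ Ici 0, k s ≤ 0 := fun s hs => (hk s hs).trans (neg_nonpos.2 (sq_nonneg a))
  have hFr := hJ.pos hk0 hr
  refine Integrable.mono' ((exp_neg_integrableOn_Ioi r ha).const_mul (exp (a * r) / F r))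
    ((hJ.continuousOn_one_div hk0).mono (Ioi_subset_Ioi hr.le)
      |>.aestronglyMeasurable measurableSet_Ioi) ?_
  refine (ae_restrict_iff' measurableSet_Ioi).2 (ae_of_all _ fun t ht => ?_)
  have hFt := hJ.pos hk0 (hr.trans ht)
  have hgrow := hJ.monotoneOn_mul_exp_neg hk hr.le (hr.trans ht).le ht.le
  rw [norm_of_nonneg (one_div_pos.2 hFt).le, div_mul_eq_mul_div, div_le_div_iff₀ hFt hFr, one_mul]
  calc F r = F r * exp (-(a * r)) * exp (a * r) := by
        rw [mul_assoc, ← exp_add, neg_add_cancel, exp_zero, mul_one]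
    _ ≤ F t * exp (-(a * t)) * exp (a * r) := by gcongr
    _ = exp (a * r) * exp (-a * t) * F t := by ring_nf

end IsJacobiSolution

theorem stmt_13_general (a : ℝ) (ha : 0 < a) (k F F' F'' : ℝ → ℝ)
    (hk_le : ∀ s ∈ Set.Ici (0 : ℝ), k s ≤ -a ^ 2)
    (hF' : ∀ s ∈ Set.Ici (0 : ℝ), HasDerivWithinAt F (F' s) (Set.Ici 0) s)
    (hF'' : ∀ s ∈ Set.Ici (0 : ℝ), HasDerivWithinAt F' (F'' s) (Set.Ici 0) s)
    (hODE : ∀ s ∈ Set.Ici (0 : ℝ), F'' s + k s * F s = 0)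
    (hF0 : F 0 = 0) (hF'0 : F' 0 = 1)
    (g : ℝ → ℝ) (hg : ∀ r > (0 : ℝ), g r = Real.exp (-∫ t in Set.Ioi r, 1 / F t)) :
    (∀ r > (0 : ℝ), HasDerivAt g (g r / F r) r ∧
      HasDerivAt (fun x => g x / F x) (g r * (1 - F' r) / (F r) ^ 2) r ∧
      g r * (1 - F' r) / (F r) ^ 2 ≤ 0) ∧
      ConcaveOn ℝ (Set.Ioi 0) g := by
  have hJ : IsJacobiSolution k F F' F'' := ⟨hF', hF'', hODE, hF0, hF'0⟩
  have hk0 : ∀ s ∈ Ici 0, k s ≤ 0 := fun s hs => (hk_le s hs).trans (neg_nonpos.2 (sq_nonneg a))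
  have hg' : ∀ r > (0 : ℝ), HasDerivAt g (g r / F r) r := fun r hr => by
    simpa only [mul_one_div] using hasDerivAt_exp_neg_integral_Ioi (hJ.continuousOn_one_div hk0)
      (fun y hy => hJ.integrableOn_one_div_Ioi ha hk_le hy) hg hr
  have hg'' : ∀ r > (0 : ℝ), HasDerivAt (fun x => g x / F x) (g r * (1 - F' r) / (F r) ^ 2) r :=
    fun r hr => by
      have hFr := (hJ.pos hk0 hr).ne'
      refine ((hg' r hr).div ((hF' r hr.le).hasDerivAt (Ici_mem_nhds hr)) hFr).congr_deriv ?_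
      rw [div_mul_cancel₀ _ hFr]
      ring
  have hg''_nonpos : ∀ r > (0 : ℝ), g r * (1 - F' r) / (F r) ^ 2 ≤ 0 := fun r hr => by
    have hgr : 0 < g r := (hg r hr).symm ▸ exp_pos _
    have := hJ.one_le_deriv hk0 r hr.le
    exact div_nonpos_of_nonpos_of_nonneg (mul_nonpos_of_nonneg_of_nonpos hgr.le (by linarith))
      (sq_nonneg _)
  exact ⟨fun r hr => ⟨hg' r hr, hg'' r hr, hg''_nonpos r hr⟩,
    concaveOn_of_hasDerivWithinAt2_nonpos (convex_Ioi 0)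
      (fun x hx => (hg' x hx).continuousAt.continuousWithinAt)
      (fun x hx => (hg' x (interior_subset hx)).hasDerivWithinAt)
      (fun x hx => (hg'' x (interior_subset hx)).hasDerivWithinAt)
      (fun x hx => hg''_nonpos x (interior_subset hx))⟩

/-- Concavity of `g(r) = exp(-∫ᵣ^∞ dt/F(t))` from Lemma 5: `g` is twice differentiable
on `(0,∞)` with `g''(r) = g(r)(1 - F'(r))/F(r)² ≤ 0`, so `g` is concave on `(0,∞)`. -/
theorem stmt_13 (a : ℝ) (ha : 0 < a) (k F F' F'' : ℝ → ℝ)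
    (hk_cont : ContinuousOn k (Set.Ici 0))
    (hk_le : ∀ s ∈ Set.Ici (0 : ℝ), k s ≤ -a ^ 2)
    (hF' : ∀ s ∈ Set.Ici (0 : ℝ), HasDerivWithinAt F (F' s) (Set.Ici 0) s)
    (hF'' : ∀ s ∈ Set.Ici (0 : ℝ), HasDerivWithinAt F' (F'' s) (Set.Ici 0) s)
    (hF''_cont : ContinuousOn F'' (Set.Ici 0))
    (hODE : ∀ s ∈ Set.Ici (0 : ℝ), F'' s + k s * F s = 0)
    (hF0 : F 0 = 0) (hF'0 : F' 0 = 1)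
    (g : ℝ → ℝ) (hg : ∀ r > (0 : ℝ), g r = Real.exp (-∫ t in Set.Ioi r, 1 / F t)) :
    (∀ r > (0 : ℝ), HasDerivAt g (g r / F r) r ∧
      HasDerivAt (fun x => g x / F x) (g r * (1 - F' r) / (F r) ^ 2) r ∧
      g r * (1 - F' r) / (F r) ^ 2 ≤ 0) ∧
      ConcaveOn ℝ (Set.Ioi 0) g :=
  stmt_13_general a ha k F F' F'' hk_le hF' hF'' hODE hF0 hF'0 g hg
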